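/- arXiv:2204.06730 — 7 statements merged into one kernel-verified Lean document; each statement's English description precedes it below -/
import Mathlib

section
/- (Persistence) Let ⟨g, W, ≤, V⟩ be an S-model for L⊃ with interpretation I. Then for every formula A of L⊃ and all w₁, w₂ ∈ W, if I(w₁, A) = 1 and w₁ ≤ w₂ then I(w₂, A) = 1. -/
/-- Formulas of the language L⊃ : propositional variables with ∧, ∨,
    intuitionistic → (`imp`) and classical ⊃ (`sup`). -/
inductive Formula : Type
  | var : ℕ → Formula
  | and : Formula → Formula → Formula
  | or  : Formula → Formula → Formula
  | imp : Formula → Formula → Formula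
  | sup : Formula → Formula → Formula

/-- An S-model ⟨g, W, ≤, V⟩. -/
structure SModel where
  W : Type
  le : W → W → Prop
  refl : ∀ w, le w w
  trans : ∀ u v w, le u v → le v w → le u w
  g : W
  least : ∀ w, le g w
  V : W → ℕ → Prop
  hered : ∀ w₁ w₂ p, V w₁ p → le w₁ w₂ → V w₂ p

/-- The interpretation I : `M.sat A w` means I(w, A) = 1. -/
def SModel.sat (M : SModel) : Formula → M.W → Prop
  | .var p, w => M.V w p
  | .and A B, w => M.sat A w ∧ M.sat B w
  | .or A B, w => M.sat A w ∨ M.sat B w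
  | .sup A B, w => ¬ M.sat A M.g ∨ M.sat B w
  | .imp A B, w => ∀ x, M.le w x → M.sat A x → M.sat B x

/-- Semantic consequence: Γ ⊨ A. -/
def SConseq (Γ : Set Formula) (A : Formula) : Prop :=
  ∀ M : SModel, (∀ B ∈ Γ, M.sat B M.g) → M.sat A M.g

/-- Persistence: if I(w₁,A)=1 and w₁ ≤ w₂ then I(w₂,A)=1, for every formula A of L⊃. -/
theorem persistence (M : SModel) (A : Formula) (w₁ w₂ : M.W)
    (h : M.sat A w₁) (hle : M.le w₁ w₂) : M.sat A w₂ := by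
  induction A generalizing w₁ w₂ with
  | var => exact M.hered _ _ _ h hle
  | and _ _ ihA ihB => exact ⟨ihA _ _ h.1 hle, ihB _ _ h.2 hle⟩
  | or _ _ ihA ihB => exact h.imp (ihA _ _ · hle) (ihB _ _ · hle)
  -- the antecedent of `⊃` is read at the root `g`, so only the consequent has to persist
  | sup _ _ _ ihB => exact h.imp id (ihB _ _ · hle)
  | imp => exact fun x hx => h x (M.trans _ _ _ hle hx)
end

section
/- (Non-definability of empirical negation) For every frame ⟨g, W, ≤⟩ (W a set, ≤ reflexive and transitive on W, g a least element) there is a valuation V making ⟨g, W, ≤, V⟩ an S-model such that there is no formula B of L⊃ in the single propositional variable p with the property that for every formula A and every w ∈ W, I(w, B[p/A]) = 1 iff I(g, A) ≠ 1 (where B[p/A] is the result of substituting A for p in B). In particular, the model with V(g,p)=1 for all p witnesses this. -/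
/-- Substitution of the formula A for the propositional variable p. -/
def Formula.subst (p : ℕ) (A : Formula) : Formula → Formula
  | .var q => if q = p then A else .var q
  | .and B C => (Formula.subst p A B).and (Formula.subst p A C)
  | .or B C => (Formula.subst p A B).or (Formula.subst p A C)
  | .imp B C => (Formula.subst p A B).imp (Formula.subst p A C)
  | .sup B C => (Formula.subst p A B).sup (Formula.subst p A C)

/-- B is a formula in the single propositional variable p. -/
def Formula.onlyVar (p : ℕ) : Formula → Prop
  | .var q => q = p
  | .and B C => Formula.onlyVar p B ∧ Formula.onlyVar p C
  | .or B C => Formula.onlyVar p B ∧ Formula.onlyVar p C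
  | .imp B C => Formula.onlyVar p B ∧ Formula.onlyVar p C
  | .sup B C => Formula.onlyVar p B ∧ Formula.onlyVar p C

/-!
If every variable holds at the least state `g`, heredity makes every variable true everywhere,
and then every formula of L⊃ is true everywhere. In such a model `B[p/A]` and `A` both hold at
`g`, so `B[p/A]` cannot be true exactly when `A` fails at `g`.
-/

namespace SModel

theorem V_of_V_g (M : SModel) {p : ℕ} (hp : M.V M.g p) (w : M.W) : M.V w p :=
  M.hered M.g w p hp (M.least w)

theorem sat_of_forall_V_g (M : SModel) (hV : ∀ p, M.V M.g p) (A : Formula) (w : M.W) :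
    M.sat A w := by
  induction A generalizing w with
  | var p => exact M.V_of_V_g (hV p) w
  | and B C ihB ihC => exact ⟨ihB w, ihC w⟩
  | or B C ihB _ => exact Or.inl (ihB w)
  | imp B C _ ihC => exact fun x _ _ => ihC x
  | sup B C _ ihC => exact Or.inr (ihC w)

end SModel

/-- Non-definability of empirical negation: for every frame ⟨g, W, ≤⟩ there is a
valuation V making ⟨g, W, ≤, V⟩ an S-model (indeed, the one with V(g,p)=1 for
all p) such that no formula B in the single variable p satisfies:
for every formula A and every world w, I(w, B[p/A]) = 1 iff I(g, A) ≠ 1. -/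
theorem empirical_negation_not_definable
    (W : Type) (le : W → W → Prop) (g : W)
    (refl : ∀ w, le w w) (trans : ∀ u v w, le u v → le v w → le u w)
    (least : ∀ w, le g w) :
    ∃ (V : W → ℕ → Prop)
      (hered : ∀ w₁ w₂ p, V w₁ p → le w₁ w₂ → V w₂ p),
      (∀ p : ℕ, V g p) ∧
      ∀ (p : ℕ) (B : Formula), B.onlyVar p →
        ¬ (∀ (A : Formula) (w : W),
            (SModel.mk W le refl trans g least V hered).sat (Formula.subst p A B) w ↔
            ¬ (SModel.mk W le refl trans g least V hered).sat A g) := by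
  let M : SModel := ⟨W, le, refl, trans, g, least, fun _ _ => True, fun _ _ _ h _ => h⟩
  have hV : ∀ p, M.V M.g p := fun _ => trivial
  have hsat : ∀ A w, M.sat A w := M.sat_of_forall_V_g hV
  refine ⟨M.V, M.hered, hV, fun p B _ hB => ?_⟩
  exact (hB (.var p) g).mp (hsat _ g) (hsat _ g)
end

section
/- In the Hilbert system S the following hold for all formulas A, B, C of L⊃ and all sets of formulas Γ: (MP2) if Γ ⊢ A and Γ ⊢ A→B then Γ ⊢ B; (MP3) ⊢ A⊃((A⊃B)→B); (Kmix) ⊢ A→(B⊃A); (K⊃) ⊢ A⊃(B⊃A); (S⊃) ⊢ (A⊃(B⊃C))⊃((A⊃B)⊃(A⊃C)); (C) ⊢ A∨(A⊃B). -/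
/-- The Hilbert system S : `SDeriv Γ A` means Γ ⊢ A. -/
inductive SDeriv : Set Formula → Formula → Prop
  | hyp {Γ A} : A ∈ Γ → SDeriv Γ A
  | ax1 {Γ} (A B : Formula) : SDeriv Γ (A.imp (B.imp A))
  | ax2 {Γ} (A B C : Formula) :
      SDeriv Γ ((A.imp (B.imp C)).imp ((A.imp B).imp (A.imp C)))
  | ax3 {Γ} (A B : Formula) : SDeriv Γ ((A.and B).imp A)
  | ax4 {Γ} (A B : Formula) : SDeriv Γ ((A.and B).imp B)
  | ax5 {Γ} (A B C : Formula) :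
      SDeriv Γ ((C.imp A).imp ((C.imp B).imp (C.imp (A.and B))))
  | ax6 {Γ} (A B : Formula) : SDeriv Γ (A.imp (A.or B))
  | ax7 {Γ} (A B : Formula) : SDeriv Γ (B.imp (A.or B))
  | ax8 {Γ} (A B C : Formula) :
      SDeriv Γ ((A.imp C).imp ((B.imp C).imp ((A.or B).imp C)))
  | axM1 {Γ} (A B : Formula) : SDeriv Γ ((A.imp B).sup (A.sup B))
  | axM2 {Γ} (A B C : Formula) :
      SDeriv Γ ((A.sup (B.sup C)).imp ((A.sup B).sup (A.sup C)))
  | axM3 {Γ} (A B C : Formula) :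
      SDeriv Γ ((A.sup (B.imp C)).imp (B.imp (A.sup C)))
  | axM4 {Γ} (A B C : Formula) :
      SDeriv Γ ((A.imp (B.sup C)).imp (B.sup (A.imp C)))
  | axM5 {Γ} (A B C : Formula) :
      SDeriv Γ (((A.sup B).sup C).imp ((A.sup C).imp C))
  | axM6 {Γ} (A B C : Formula) :
      SDeriv Γ ((A.sup C).imp ((B.sup C).imp ((A.or B).sup C)))
  | mp {Γ A B} : SDeriv Γ A → SDeriv Γ (A.sup B) → SDeriv Γ B

/-! AxM1 lets every `→`-theorem be used as a `⊃`-theorem, so modus ponens for `→` is derivable.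
(MP3) and (Kmix) are AxM4 and AxM3 applied to an identity `A → A`, and (C) is AxM5 with
conclusion `A ∨ (A ⊃ B)`, whose two premises are Ax6 and Ax7. -/

namespace SDeriv

variable {Γ : Set Formula}

theorem sup_of_imp {A B : Formula} (h : SDeriv Γ (A.imp B)) : SDeriv Γ (A.sup B) :=
  mp h (axM1 A B)

theorem mp_imp {A B : Formula} (hA : SDeriv Γ A) (hAB : SDeriv Γ (A.imp B)) : SDeriv Γ B :=
  mp hA (sup_of_imp hAB)

theorem imp_self (A : Formula) : SDeriv Γ (A.imp A) :=
  mp_imp (ax1 A A) (mp_imp (ax1 A (A.imp A)) (ax2 A (A.imp A) A))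

theorem sup_intro {A : Formula} (B : Formula) (h : SDeriv Γ A) : SDeriv Γ (B.sup A) :=
  sup_of_imp (mp_imp h (ax1 A B))

theorem imp_sup_const (A B : Formula) : SDeriv Γ (A.imp (B.sup A)) :=
  mp_imp (sup_intro B (imp_self A)) (axM3 B A A)

theorem sup_sup_const (A B : Formula) : SDeriv Γ (A.sup (B.sup A)) :=
  sup_of_imp (imp_sup_const A B)

theorem sup_distrib (A B C : Formula) :
    SDeriv Γ ((A.sup (B.sup C)).sup ((A.sup B).sup (A.sup C))) :=
  sup_of_imp (axM2 A B C)

theorem sup_mp (A B : Formula) : SDeriv Γ (A.sup ((A.sup B).imp B)) :=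
  mp_imp (imp_self (A.sup B)) (axM4 (A.sup B) A B)

theorem or_sup_self (A B : Formula) : SDeriv Γ (A.or (A.sup B)) :=
  mp_imp (sup_of_imp (ax6 A (A.sup B)))
    (mp_imp (sup_of_imp (ax7 A (A.sup B))) (axM5 A B (A.or (A.sup B))))

end SDeriv

/-- (MP2), (MP3), (Kmix), (K⊃), (S⊃) and (C) are derivable in S. -/
theorem derivable_rules_and_formulas :
    (∀ (Γ : Set Formula) (A B : Formula),
      SDeriv Γ A → SDeriv Γ (A.imp B) → SDeriv Γ B) ∧
    (∀ A B : Formula, SDeriv ∅ (A.sup ((A.sup B).imp B))) ∧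
    (∀ A B : Formula, SDeriv ∅ (A.imp (B.sup A))) ∧
    (∀ A B : Formula, SDeriv ∅ (A.sup (B.sup A))) ∧
    (∀ A B C : Formula,
      SDeriv ∅ ((A.sup (B.sup C)).sup ((A.sup B).sup (A.sup C)))) ∧
    (∀ A B : Formula, SDeriv ∅ (A.or (A.sup B))) :=
  ⟨fun _ _ _ => SDeriv.mp_imp, SDeriv.sup_mp, SDeriv.imp_sup_const, SDeriv.sup_sup_const,
    SDeriv.sup_distrib, SDeriv.or_sup_self⟩
end

section
/- (Failure of the deduction theorem for →) For distinct propositional variables p and q, the formula (p⊃q)→(p→q) is not a theorem of the Hilbert system S, i.e. it is not the case that ⊢ (p⊃q)→(p→q). -/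
/-! Evaluate formulas in a Heyting algebra, reading `→` as Heyting implication and `A ⊃ B` as
`B` when `A` takes the value `⊤` and as `⊤` otherwise. If `⊤` is sup-irreducible, every axiom
of S evaluates to `⊤` and MP preserves the value `⊤`. In the chain `0 < 1 < 2` the valuation
`p ↦ 1`, `q ↦ 0` gives `p ⊃ q = 2` but `p → q = 0`, so `(p ⊃ q) → (p → q)` evaluates to `0`. -/

section Countermodel

variable {H : Type*} [HeytingAlgebra H] [DecidableEq H]

def classicalImp (a b : H) : H := if a = ⊤ then b else ⊤

theorem axM1_valid (a b : H) : classicalImp (a ⇨ b) (classicalImp a b) = ⊤ := by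
  unfold classicalImp; split_ifs <;> simp_all

theorem axM2_valid (a b c : H) :
    classicalImp a (classicalImp b c) ⇨
      classicalImp (classicalImp a b) (classicalImp a c) = ⊤ := by
  unfold classicalImp; split_ifs <;> simp_all

theorem axM3_valid (a b c : H) : classicalImp a (b ⇨ c) ⇨ b ⇨ classicalImp a c = ⊤ := by
  unfold classicalImp; split_ifs <;> simp_all

theorem axM4_valid (a b c : H) : (a ⇨ classicalImp b c) ⇨ classicalImp b (a ⇨ c) = ⊤ := by
  unfold classicalImp; split_ifs <;> simp_all

theorem axM5_valid (a b c : H) :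
    classicalImp (classicalImp a b) c ⇨ classicalImp a c ⇨ c = ⊤ := by
  unfold classicalImp; split_ifs <;> simp_all

theorem axM6_valid (hTop : SupIrred (⊤ : H)) (a b c : H) :
    classicalImp a c ⇨ classicalImp b c ⇨ classicalImp (a ⊔ b) c = ⊤ := by
  by_cases hab : a ⊔ b = ⊤
  · rcases hTop.2 hab with rfl | rfl <;> simp [classicalImp]
  · simp [classicalImp, hab]

def Formula.eval (v : ℕ → H) : Formula → H
  | var n => v n
  | and A B => A.eval v ⊓ B.eval v
  | or A B => A.eval v ⊔ B.eval v
  | imp A B => A.eval v ⇨ B.eval v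
  | sup A B => classicalImp (A.eval v) (B.eval v)

theorem SDeriv.eval_eq_top (hTop : SupIrred (⊤ : H)) {Γ : Set Formula} {A : Formula}
    (h : SDeriv Γ A) (v : ℕ → H) (hΓ : ∀ B ∈ Γ, B.eval v = ⊤) : A.eval v = ⊤ := by
  induction h with
  | hyp hA => exact hΓ _ hA
  | mp _ _ ihA ihAB => simpa [Formula.eval, classicalImp, ihA] using ihAB
  | ax1 | ax3 | ax4 | ax6 | ax7 => simp [Formula.eval]
  | ax2 A B C => simp [Formula.eval, inf_comm (A.eval v ⇨ B.eval v), himp_himp]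
  | ax5 => simp only [Formula.eval]; rw [himp_eq_top_iff, himp_inf_distrib, le_himp_iff]
  | ax8 => simp only [Formula.eval]; rw [himp_eq_top_iff, sup_himp_distrib, le_himp_iff]
  | axM1 => exact axM1_valid _ _
  | axM2 => exact axM2_valid _ _ _
  | axM3 => exact axM3_valid _ _ _
  | axM4 => exact axM4_valid _ _ _
  | axM5 => exact axM5_valid _ _ _
  | axM6 => exact axM6_valid hTop _ _ _

end Countermodel

/-- Failure of the deduction theorem for → : (p⊃q)→(p→q) is not a theorem of S. -/
theorem deduction_theorem_fails_for_imp (p q : ℕ) (hpq : p ≠ q) :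
    ¬ SDeriv ∅ (((Formula.var p).sup (Formula.var q)).imp
        ((Formula.var p).imp (Formula.var q))) := by
  intro h
  have := h.eval_eq_top (supIrred_iff_not_isMin.2 not_isMin_top)
    (fun n => if n = p then (1 : Fin 3) else 0) (by simp)
  simp only [Formula.eval, if_neg hpq.symm] at this
  revert this
  decide
end

section
/- (Soundness of S) For every set of formulas Γ and every formula A of L⊃: if Γ ⊢ A in the Hilbert system S, then Γ ⊨ A with respect to S-models. -/
/-!
Each axiom is true at every state of every S-model, and (MP) preserves truth at the root `g`:
if `A` and `A ⊃ B` hold at `g`, the first disjunct `I(g, A) ≠ 1` of `A ⊃ B` is excluded.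
The only semantic fact beyond unfolding is that heredity propagates from variables to all
formulas; for `A ⊃ B` this works because its antecedent is always evaluated at `g`.
-/

namespace SModel

variable (M : SModel) {A B C : Formula} {w : M.W}

theorem sat_mono : ∀ (A : Formula) {w₁ w₂ : M.W}, M.le w₁ w₂ → M.sat A w₁ → M.sat A w₂
  | .var _, _, _, h, hs => M.hered _ _ _ hs h
  | .and A B, _, _, h, hs => ⟨sat_mono A h hs.1, sat_mono B h hs.2⟩
  | .or A B, _, _, h, hs => hs.imp (sat_mono A h) (sat_mono B h)
  | .sup _ B, _, _, h, hs => hs.imp_right (sat_mono B h)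
  | .imp _ _, _, _, h, hs => fun x hx hA => hs x (M.trans _ _ _ h hx) hA

theorem sat_ax1 : M.sat (A.imp (B.imp A)) w :=
  fun _ _ hA _ hy _ => M.sat_mono A hy hA

theorem sat_ax2 : M.sat ((A.imp (B.imp C)).imp ((A.imp B).imp (A.imp C))) w :=
  fun _ _ h₁ _ hy h₂ z hz hA => h₁ z (M.trans _ _ _ hy hz) hA z (M.refl z) (h₂ z hz hA)

theorem sat_ax3 : M.sat ((A.and B).imp A) w :=
  fun _ _ h => h.1

theorem sat_ax4 : M.sat ((A.and B).imp B) w :=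
  fun _ _ h => h.2

theorem sat_ax5 : M.sat ((C.imp A).imp ((C.imp B).imp (C.imp (A.and B)))) w :=
  fun _ _ h₁ _ hy h₂ z hz hC => ⟨h₁ z (M.trans _ _ _ hy hz) hC, h₂ z hz hC⟩

theorem sat_ax6 : M.sat (A.imp (A.or B)) w :=
  fun _ _ => Or.inl

theorem sat_ax7 : M.sat (B.imp (A.or B)) w :=
  fun _ _ => Or.inr

theorem sat_ax8 : M.sat ((A.imp C).imp ((B.imp C).imp ((A.or B).imp C))) w :=
  fun _ _ h₁ _ hy h₂ z hz hAB =>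
    hAB.elim (h₁ z (M.trans _ _ _ hy hz)) (h₂ z hz)

theorem sat_axM1 : M.sat ((A.imp B).sup (A.sup B)) w := by
  by_cases hAB : M.sat (A.imp B) M.g
  · by_cases hA : M.sat A M.g
    · exact Or.inr (Or.inr (M.sat_mono B (M.least w) (hAB M.g (M.refl _) hA)))
    · exact Or.inr (Or.inl hA)
  · exact Or.inl hAB

theorem sat_axM2 : M.sat ((A.sup (B.sup C)).imp ((A.sup B).sup (A.sup C))) w := by
  rintro x - (hA | hB | hC)
  · exact Or.inr (Or.inl hA)
  · by_cases hA : M.sat A M.g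
    · exact Or.inl fun h => h.elim (absurd hA) hB
    · exact Or.inr (Or.inl hA)
  · exact Or.inr (Or.inr hC)

theorem sat_axM3 : M.sat ((A.sup (B.imp C)).imp (B.imp (A.sup C))) w :=
  fun _ _ h _ hy hB => h.imp_right fun hBC => hBC _ hy hB

theorem sat_axM4 : M.sat ((A.imp (B.sup C)).imp (B.sup (A.imp C))) w := by
  intro x _ h
  by_cases hB : M.sat B M.g
  · exact Or.inr fun y hy hA => (h y hy hA).resolve_left (not_not_intro hB)
  · exact Or.inl hB

theorem sat_axM5 : M.sat (((A.sup B).sup C).imp ((A.sup C).imp C)) w := by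
  rintro x - (hAB | hC) y hy hAC
  · have hA : M.sat A M.g := by_contra fun hA => hAB (Or.inl hA)
    exact hAC.resolve_left (not_not_intro hA)
  · exact M.sat_mono C hy hC

theorem sat_axM6 : M.sat ((A.sup C).imp ((B.sup C).imp ((A.or B).sup C))) w := by
  rintro x - (hA | hC) y hy (hB | hC')
  · exact Or.inl fun h => h.elim hA hB
  · exact Or.inr hC'
  · exact Or.inr (M.sat_mono C hy hC)
  · exact Or.inr hC'

theorem sat_of_sat_sup (hA : M.sat A M.g) (hAB : M.sat (A.sup B) w) : M.sat B w :=
  hAB.resolve_left (not_not_intro hA)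

end SModel

/-- Soundness of S: if Γ ⊢ A then Γ ⊨ A. -/
theorem soundness (Γ : Set Formula) (A : Formula)
    (h : SDeriv Γ A) : SConseq Γ A := by
  induction h with
  | hyp hA => exact fun _ hΓ => hΓ _ hA
  | ax1 => exact fun M _ => M.sat_ax1
  | ax2 => exact fun M _ => M.sat_ax2
  | ax3 => exact fun M _ => M.sat_ax3
  | ax4 => exact fun M _ => M.sat_ax4
  | ax5 => exact fun M _ => M.sat_ax5
  | ax6 => exact fun M _ => M.sat_ax6
  | ax7 => exact fun M _ => M.sat_ax7
  | ax8 => exact fun M _ => M.sat_ax8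
  | axM1 => exact fun M _ => M.sat_axM1
  | axM2 => exact fun M _ => M.sat_axM2
  | axM3 => exact fun M _ => M.sat_axM3
  | axM4 => exact fun M _ => M.sat_axM4
  | axM5 => exact fun M _ => M.sat_axM5
  | axM6 => exact fun M _ => M.sat_axM6
  | mp _ _ ihA ihAB => exact fun M hΓ => M.sat_of_sat_sup (ihA M hΓ) (ihAB M hΓ)
end

section
/- If ⟨Σ, Δ⟩ is a Π-partition (with respect to derivability in the Hilbert system S over L⊃), then Σ is a prime Π-theory. -/
/-- `PiTheory P S` : S is a P-theory (clauses (a) and (b)), where ⊢_P is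
    derivability in S from the extra assumptions P. -/
def PiTheory (P S : Set Formula) : Prop :=
  (∀ A B : Formula, A ∈ S → B ∈ S → Formula.and A B ∈ S) ∧
  (∀ A B : Formula, SDeriv P (A.imp B) → A ∈ S → B ∈ S)

/-- S is prime. -/
def IsPrimeSet (S : Set Formula) : Prop :=
  ∀ A B : Formula, Formula.or A B ∈ S → A ∈ S ∨ B ∈ S

/-- Conjunction A ∧ B₁ ∧ ⋯ ∧ Bₙ of a nonempty list. -/
def conjFold : Formula → List Formula → Formula
  | A, [] => A
  | A, B :: L => A.and (conjFold B L)

/-- Disjunction A ∨ B₁ ∨ ⋯ ∨ Bₙ of a nonempty list. -/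
def disjFold : Formula → List Formula → Formula
  | A, [] => A
  | A, B :: L => A.or (disjFold B L)

/-- `SeqDeriv P S D` : Σ ⊢_Π Δ, i.e. Σ∪Π ⊢ D₁ ∨ ⋯ ∨ Dₙ for some D₁,…,Dₙ ∈ Δ. -/
def SeqDeriv (P S D : Set Formula) : Prop :=
  ∃ (D₀ : Formula) (Ds : List Formula), D₀ ∈ D ∧ (∀ X ∈ Ds, X ∈ D) ∧
    SDeriv (S ∪ P) (disjFold D₀ Ds)

/-- `ImpDeriv P S D` : ⊢_Π Σ→Δ, i.e. ⊢_Π (C₁∧⋯∧Cₙ)→(D₁∨⋯∨Dₘ)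
    for some C₁,…,Cₙ ∈ Σ and D₁,…,Dₘ ∈ Δ. -/
def ImpDeriv (P S D : Set Formula) : Prop :=
  ∃ (C₀ : Formula) (Cs : List Formula) (D₀ : Formula) (Ds : List Formula),
    C₀ ∈ S ∧ (∀ X ∈ Cs, X ∈ S) ∧ D₀ ∈ D ∧ (∀ X ∈ Ds, X ∈ D) ∧
    SDeriv P ((conjFold C₀ Cs).imp (disjFold D₀ Ds))

/-- ⟨Σ,Δ⟩ is a Π-partition. -/
def PiPartition (P S D : Set Formula) : Prop :=
  S ∪ D = Set.univ ∧ ¬ ImpDeriv P S D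

/-- S is P-deductively closed. -/
def PiDedClosed (P S : Set Formula) : Prop :=
  ∀ A : Formula, SDeriv (S ∪ P) A → A ∈ S

/-! Each clause can fail only by putting a formula into Δ that is `→`-derivable from members of
Σ, which gives ⊢_Π Σ→Δ: for conjunction and primeness via `A ∧ B → A ∧ B` and `A ∨ B → A ∨ B`,
and for closure under ⊢_Π via the given implication itself. -/

lemma SDeriv.mpi {Γ : Set Formula} {A B : Formula} (hA : SDeriv Γ A)
    (hAB : SDeriv Γ (A.imp B)) : SDeriv Γ B :=
  .mp hA (.mp hAB (.axM1 A B))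

lemma SDeriv.imp_self_s9 {Γ : Set Formula} (A : Formula) : SDeriv Γ (A.imp A) :=
  .mpi (.ax1 A A) (.mpi (.ax1 A (A.imp A)) (.ax2 A (A.imp A) A))

lemma PiPartition.mem_right_of_notMem_left {P S D : Set Formula} (h : PiPartition P S D)
    {A : Formula} (hA : A ∉ S) : A ∈ D :=
  (Set.eq_univ_iff_forall.1 h.1 A).resolve_left hA

/-- If ⟨Σ,Δ⟩ is a Π-partition then Σ is a prime Π-theory. -/
theorem partition_prime_theory (P S D : Set Formula)
    (h : PiPartition P S D) : PiTheory P S ∧ IsPrimeSet S := by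
  refine ⟨⟨fun A B hA hB => ?_, fun A B hAB hA => ?_⟩, fun A B hAB => ?_⟩
  · by_contra hAnd
    exact h.2 ⟨A, [B], A.and B, [], hA, List.forall_mem_singleton.2 hB,
      h.mem_right_of_notMem_left hAnd, by simp, .imp_self _⟩
  · by_contra hB
    exact h.2 ⟨A, [], B, [], hA, by simp, h.mem_right_of_notMem_left hB, by simp, hAB⟩
  · by_contra! hneither
    exact h.2 ⟨A.or B, [], A, [B], hAB, by simp, h.mem_right_of_notMem_left hneither.1,
      List.forall_mem_singleton.2 (h.mem_right_of_notMem_left hneither.2), .imp_self _⟩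
end

section
/- If Σ is prime and Π-deductively closed (with respect to derivability in the Hilbert system S over L⊃) and A ∉ Σ, then A⊃B ∈ Σ for every formula B. -/
namespace SDeriv

variable {Γ : Set Formula}

/-- Excluded middle for `⊃`: AxM5 with `C := (A ⊃ B) ∨ A`, whose two premises are
lifted instances of Ax6 and Ax7. -/
theorem sup_or_self (A B : Formula) : SDeriv Γ ((A.sup B).or A) :=
  (sup_of_imp (.ax7 (A.sup B) A)).mp_imp ((sup_of_imp (.ax6 (A.sup B) A)).mp_imp (.axM5 A B _))

end SDeriv

/-- If Σ is prime, Π-deductively closed and A ∉ Σ, then A ⊃ B ∈ Σ for every B. -/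
theorem sup_mem_of_not_mem (P S : Set Formula) (A : Formula)
    (hp : IsPrimeSet S) (hd : PiDedClosed P S) (hA : A ∉ S) :
    ∀ B : Formula, A.sup B ∈ S :=
  fun B => (hp _ _ (hd _ (SDeriv.sup_or_self A B))).resolve_right hA
end
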